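/- A set X ⊆ ℝ^d is Capra-convex if and only if its indicator function satisfies ι_X = ι_{cl conv(ρ(X))} ∘ ρ, where cl conv denotes closed convex hull and ρ the radial projection. -/

import Mathlib

open Classical in
noncomputable def radProj {d : ℕ} (N : EuclideanSpace ℝ (Fin d) → ℝ)
    (x : EuclideanSpace ℝ (Fin d)) : EuclideanSpace ℝ (Fin d) :=
  if x = 0 then 0 else (N x)⁻¹ • x

noncomputable def capraConj {d : ℕ} (N : EuclideanSpace ℝ (Fin d) → ℝ)
    (f : EuclideanSpace ℝ (Fin d) → EReal) (y : EuclideanSpace ℝ (Fin d)) : EReal :=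
  ⨆ x : EuclideanSpace ℝ (Fin d), ((inner ℝ (radProj N x) y : ℝ) : EReal) - f x

noncomputable def capraBiconj {d : ℕ} (N : EuclideanSpace ℝ (Fin d) → ℝ)
    (f : EuclideanSpace ℝ (Fin d) → EReal) (x : EuclideanSpace ℝ (Fin d)) : EReal :=
  ⨆ y : EuclideanSpace ℝ (Fin d), ((inner ℝ (radProj N x) y : ℝ) : EReal) - capraConj N f y

open Classical in
noncomputable def ind {d : ℕ} (X : Set (EuclideanSpace ℝ (Fin d)))
    (x : EuclideanSpace ℝ (Fin d)) : EReal :=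
  if x ∈ X then 0 else ⊤

def IsCapraConvex {d : ℕ} (N : EuclideanSpace ℝ (Fin d) → ℝ)
    (X : Set (EuclideanSpace ℝ (Fin d))) : Prop :=
  ind X = capraBiconj N (ind X)

def coneHull {d : ℕ} (A : Set (EuclideanSpace ℝ (Fin d))) : Set (EuclideanSpace ℝ (Fin d)) :=
  {y | ∃ a ∈ A, ∃ l : ℝ, 0 < l ∧ y = l • a}

/-!
The coupling sees `x` only through `ρ x`, so the Capra conjugate of `ι_X` is the support function
`σ(y) = sup_{a ∈ ρ(X)} ⟪a, y⟫` of `ρ(X)`, and the Capra biconjugate at `x` is the Fenchel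
biconjugate of `σ` at `ρ x`. The Fenchel biconjugate of a support function is the indicator of the
closed convex hull: points of the hull satisfy every inequality `⟪·, y⟫ ≤ σ y`, and a point outside
is strictly separated from it by some `y`, along whose ray `⟪z, t y⟫ - σ (t y)` grows without bound.
-/

open scoped RealInnerProductSpace

section SupportFunction

variable {E : Type*} [NormedAddCommGroup E] [InnerProductSpace ℝ E]

noncomputable def supportFun (A : Set E) (y : E) : EReal :=
  ⨆ a ∈ A, ((⟪a, y⟫ : ℝ) : EReal)

theorem supportFun_zero {A : Set E} (hA : A.Nonempty) : supportFun A 0 = 0 := by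
  simp only [supportFun, inner_zero_right, EReal.coe_zero]
  exact biSup_const hA

theorem inner_le_supportFun_of_mem_closure_convexHull {A : Set E} {z : E}
    (hz : z ∈ closure (convexHull ℝ A)) (y : E) : ((⟪z, y⟫ : ℝ) : EReal) ≤ supportFun A y := by
  refine EReal.le_of_forall_lt_iff_le.mp fun r hr => ?_
  have hA : A ⊆ {w | ⟪w, y⟫ ≤ r} := fun a ha =>
    EReal.coe_le_coe_iff.mp ((le_iSup₂ (f := fun a _ => ((⟪a, y⟫ : ℝ) : EReal)) a ha).trans hr.le)
  have hHalf : IsClosed {w : E | ⟪w, y⟫ ≤ r} :=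
    isClosed_le (continuous_id.inner continuous_const) continuous_const
  exact EReal.coe_le_coe_iff.mpr
    (closure_minimal (convexHull_min hA (convex_halfSpace_le (innerₗ E |>.flip y).isLinear r))
      hHalf hz)

variable [CompleteSpace E]

theorem iSup_inner_sub_supportFun_eq_top {A : Set E} {z : E}
    (hz : z ∉ closure (convexHull ℝ A)) : ⨆ y, ((⟪z, y⟫ : ℝ) : EReal) - supportFun A y = ⊤ := by
  obtain ⟨f, u, hfu, huz⟩ :=
    geometric_hahn_banach_closed_point (convex_convexHull ℝ A).closure isClosed_closure hz
  set y := (InnerProductSpace.toDual ℝ E).symm f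
  have hy : ∀ w, ⟪w, y⟫ = f w := fun w => by
    rw [real_inner_comm]; exact InnerProductSpace.toDual_symm_apply
  have gap : 0 < f z - u := sub_pos.mpr huz
  refine (EReal.eq_top_iff_forall_lt _).mpr fun M => ?_
  set t := (|M| + 1) / (f z - u)
  have ht : 0 < t := by positivity
  have hσ : supportFun A (t • y) ≤ ((t * u : ℝ) : EReal) := iSup₂_le fun a ha => by
    rw [EReal.coe_le_coe_iff, real_inner_smul_right, hy]
    exact mul_le_mul_of_nonneg_left
      (hfu a (subset_closure (subset_convexHull ℝ A ha))).le ht.le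
  calc (M : EReal) < ((t * f z - t * u : ℝ) : EReal) := by
        rw [EReal.coe_lt_coe_iff, ← mul_sub, div_mul_cancel₀ _ gap.ne']
        linarith [le_abs_self M]
    _ ≤ ((⟪z, t • y⟫ : ℝ) : EReal) - supportFun A (t • y) := by
        rw [EReal.coe_sub, real_inner_smul_right, hy]
        exact EReal.sub_le_sub le_rfl hσ
    _ ≤ _ := le_iSup (fun y => ((⟪z, y⟫ : ℝ) : EReal) - supportFun A y) (t • y)

open Classical in
theorem iSup_inner_sub_supportFun (A : Set E) (z : E) :
    ⨆ y, ((⟪z, y⟫ : ℝ) : EReal) - supportFun A y =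
      if z ∈ closure (convexHull ℝ A) then 0 else ⊤ := by
  split_ifs with hz
  · have hA : A.Nonempty := convexHull_nonempty_iff.mp (closure_nonempty_iff.mp ⟨z, hz⟩)
    refine le_antisymm (iSup_le fun y => ?_) ?_
    · exact EReal.sub_nonpos.mpr (inner_le_supportFun_of_mem_closure_convexHull hz y)
    · refine le_trans ?_ (le_iSup _ (0 : E))
      simp [supportFun_zero hA]
  · exact iSup_inner_sub_supportFun_eq_top hz

end SupportFunction

theorem iSup_inner_sub_ind {d : ℕ} (g : EuclideanSpace ℝ (Fin d) → EuclideanSpace ℝ (Fin d))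
    (X : Set (EuclideanSpace ℝ (Fin d))) (y : EuclideanSpace ℝ (Fin d)) :
    ⨆ x, ((⟪g x, y⟫ : ℝ) : EReal) - ind X x = supportFun (g '' X) y := by
  rw [supportFun, iSup_image]
  refine iSup_congr fun x => ?_
  by_cases hx : x ∈ X <;> simp [ind, hx]

theorem capraBiconj_ind {d : ℕ} (N : EuclideanSpace ℝ (Fin d) → ℝ)
    (X : Set (EuclideanSpace ℝ (Fin d))) :
    capraBiconj N (ind X) = fun x => ind (closure (convexHull ℝ (radProj N '' X))) (radProj N x) := by
  funext x
  simp only [capraBiconj, capraConj, iSup_inner_sub_ind]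
  exact iSup_inner_sub_supportFun _ _

theorem stmt_general {d : ℕ} (N : EuclideanSpace ℝ (Fin d) → ℝ)
    (X : Set (EuclideanSpace ℝ (Fin d))) :
    IsCapraConvex N X ↔
      ind X = fun x => ind (closure (convexHull ℝ (radProj N '' X))) (radProj N x) := by
  rw [IsCapraConvex, capraBiconj_ind]

theorem stmt {d : ℕ} (N : EuclideanSpace ℝ (Fin d) → ℝ)
    (hN0 : ∀ x : EuclideanSpace ℝ (Fin d), N x = 0 ↔ x = 0)
    (hNh : ∀ (a : ℝ) (x : EuclideanSpace ℝ (Fin d)), N (a • x) = |a| * N x)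
    (hNt : ∀ x y : EuclideanSpace ℝ (Fin d), N (x + y) ≤ N x + N y)
    (X : Set (EuclideanSpace ℝ (Fin d))) :
    IsCapraConvex N X ↔
      ind X = fun x => ind (closure (convexHull ℝ (radProj N '' X))) (radProj N x) :=
  stmt_general N X
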